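/- arXiv:2507.03548 — 4 statements merged into one kernel-verified Lean document; each statement's English description precedes it below -/
import Mathlib

section
/- Let $\{a_n\}_{n\ge 1}$ and $\{b_n\}_{n\ge 1}$ be sequences of positive real numbers. Then $\limsup_{n\to\infty} \frac{1}{n}\log\left(\sum_{k=1}^{n} a_k b_{n-k}\right) = \max\left\{\limsup_{n\to\infty}\frac{1}{n}\log a_n,\ \limsup_{n\to\infty}\frac{1}{n}\log b_n\right\}$ (where $b_0$ is also assumed positive). -/
/-!
Viewed in `ℝ≥0∞`, the three limsups are upper exponential growth rates `expGrowthSup`.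
The lower bound comes from single terms of the convolution: `a n * b 0` at index `n`, and
`a 1 * b n` at index `n + 1` (shifting by one does not increase the growth rate).
For the upper bound, if both growth rates are below `c < b`, then `a k ≤ K e^{ck}` and
`b j ≤ L e^{bj}` for all `k, j`, so the `k`-th term of the convolution at `n` is at most
`K L e^{bn} q^k` with `q = e^{c - b} < 1`; summing the geometric series bounds the growth by `b`.
-/

open Filter Finset ExpGrowth
open scoped ENNReal

lemma limsup_log_div_eq_expGrowthSup {u : ℕ → ℝ} (hu : ∀ᶠ n in atTop, 0 < u n) :
    atTop.limsup (fun n : ℕ ↦ ((Real.log (u n) / n : ℝ) : EReal)) =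
      expGrowthSup (fun n ↦ ENNReal.ofReal (u n)) :=
  limsup_congr <| hu.mono fun n hn ↦ by
    rw [ENNReal.log_ofReal_of_pos hn, EReal.coe_div]
    rfl

lemma EReal.exp_mul_natCast (x : EReal) (n : ℕ) : EReal.exp (x * n) = EReal.exp x ^ n := by
  rw [mul_comm, EReal.exp_nmul]

section Convolution

variable {u v : ℕ → ℝ≥0∞}

lemma exists_forall_le_mul_pow_of_eventually_le {r : ℝ≥0∞} (hu : ∀ n, u n ≠ ∞)
    (hr₀ : r ≠ 0) (hr : r ≠ ∞) (h : ∀ᶠ n in atTop, u n ≤ r ^ n) :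
    ∃ K ≠ ∞, ∀ n, u n ≤ K * r ^ n := by
  obtain ⟨N, hN⟩ := eventually_atTop.1 h
  refine ⟨1 + ∑ m ∈ range N, u m / r ^ m, ?_, fun n ↦ ?_⟩
  · exact ENNReal.add_ne_top.2 ⟨ENNReal.one_ne_top, ENNReal.sum_ne_top.2 fun m _ ↦
      ENNReal.div_ne_top (hu m) (pow_ne_zero m hr₀)⟩
  rcases lt_or_ge n N with hn | hn
  · rw [← ENNReal.div_le_iff (pow_ne_zero n hr₀) (ENNReal.pow_ne_top hr)]
    exact le_add_left <|
      single_le_sum (f := fun m ↦ u m / r ^ m) (fun _ _ ↦ zero_le) (mem_range.2 hn)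
  · exact (hN n hn).trans (le_mul_of_one_le_left zero_le le_self_add)

lemma expGrowthSup_comp_add_one_le :
    expGrowthSup (fun n ↦ u (n + 1)) ≤ expGrowthSup u := by
  refine EReal.le_of_forall_lt_iff_le.1 fun c hc ↦ ?_
  have h : ∀ᶠ n in atTop, u (n + 1) ≤ EReal.exp c * EReal.exp (c * n) := by
    filter_upwards [(tendsto_add_atTop_nat 1).eventually (eventually_le_exp hc)] with n hn
    rw [EReal.exp_mul_natCast, ← pow_succ']
    rwa [EReal.exp_mul_natCast] at hn
  exact (expGrowthSup_le_of_eventually_le (by simp) h).trans_eq expGrowthSup_exp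

lemma sum_Icc_mul_sub_le_of_le_mul_pow {K L r q : ℝ≥0∞} (hu : ∀ n, u n ≤ K * (r * q) ^ n)
    (hv : ∀ n, v n ≤ L * r ^ n) (n : ℕ) :
    ∑ k ∈ Icc 1 n, u k * v (n - k) ≤ K * L * (∑' k, q ^ k) * r ^ n := by
  calc ∑ k ∈ Icc 1 n, u k * v (n - k)
      ≤ ∑ k ∈ Icc 1 n, K * L * q ^ k * r ^ n := by
        refine sum_le_sum fun k hk ↦ ?_
        have hkn : k + (n - k) = n := Nat.add_sub_cancel' (mem_Icc.1 hk).2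
        calc u k * v (n - k) ≤ K * (r * q) ^ k * (L * r ^ (n - k)) := mul_le_mul' (hu k) (hv _)
          _ = K * L * q ^ k * r ^ (k + (n - k)) := by ring
          _ = K * L * q ^ k * r ^ n := by rw [hkn]
    _ = K * L * (∑ k ∈ Icc 1 n, q ^ k) * r ^ n := by rw [← sum_mul, ← mul_sum]
    _ ≤ K * L * (∑' k, q ^ k) * r ^ n := by gcongr; exact ENNReal.sum_le_tsum _

lemma expGrowthSup_sum_Icc_mul_sub_le (hu : ∀ n, u n ≠ ∞) (hv : ∀ n, v n ≠ ∞) :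
    expGrowthSup (fun n ↦ ∑ k ∈ Icc 1 n, u k * v (n - k)) ≤
      max (expGrowthSup u) (expGrowthSup v) := by
  refine EReal.le_of_forall_lt_iff_le.1 fun b hb ↦ ?_
  obtain ⟨c, hc, hcb⟩ := EReal.exists_between_coe_real hb
  set r := EReal.exp b with hr
  set q := EReal.exp (c - b : ℝ) with hq
  have hr₀ : r ≠ 0 := by simp [hr, Real.exp_pos]
  have hr_top : r ≠ ∞ := by simp [hr]
  have hq₁ : q < 1 := by
    rw [hq, EReal.exp_lt_one_iff, ← EReal.coe_zero, EReal.coe_lt_coe_iff, sub_neg]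
    exact EReal.coe_lt_coe_iff.1 hcb
  have hrq : r * q = EReal.exp c := by
    rw [hr, hq, ← EReal.exp_add, ← EReal.coe_add, add_sub_cancel]
  have hu' : ∀ᶠ n in atTop, u n ≤ (r * q) ^ n := by
    simpa only [hrq, EReal.exp_mul_natCast] using eventually_le_exp ((le_max_left _ _).trans_lt hc)
  have hv' : ∀ᶠ n in atTop, v n ≤ r ^ n := by
    simpa only [EReal.exp_mul_natCast] using
      eventually_le_exp ((le_max_right _ _).trans_lt (hc.trans hcb))
  obtain ⟨K, hK, hKu⟩ :=
    exists_forall_le_mul_pow_of_eventually_le hu (by simp [hrq, Real.exp_pos])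
      (by simp [hrq]) hu'
  obtain ⟨L, hL, hLv⟩ := exists_forall_le_mul_pow_of_eventually_le hv hr₀ hr_top hv'
  have hKLq : K * L * ∑' k, q ^ k ≠ ∞ :=
    ENNReal.mul_ne_top (ENNReal.mul_ne_top hK hL) (tsum_geometric_lt_top.2 hq₁).ne
  calc expGrowthSup (fun n ↦ ∑ k ∈ Icc 1 n, u k * v (n - k))
      ≤ expGrowthSup (fun n ↦ EReal.exp (b * n)) :=
        expGrowthSup_le_of_eventually_le hKLq <| Eventually.of_forall fun n ↦ by
          simpa only [EReal.exp_mul_natCast] using sum_Icc_mul_sub_le_of_le_mul_pow hKu hLv n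
    _ = b := expGrowthSup_exp

lemma expGrowthSup_le_expGrowthSup_sum_Icc_mul_sub_left (hv : v 0 ≠ 0) :
    expGrowthSup u ≤ expGrowthSup (fun n ↦ ∑ k ∈ Icc 1 n, u k * v (n - k)) :=
  expGrowthSup_of_eventually_ge hv <| (eventually_ge_atTop 1).mono fun n hn ↦ by
    simpa [mul_comm] using single_le_sum (f := fun k ↦ u k * v (n - k)) (fun _ _ ↦ zero_le)
      (mem_Icc.2 ⟨hn, le_rfl⟩)

lemma expGrowthSup_le_expGrowthSup_sum_Icc_mul_sub_right (hu : u 1 ≠ 0) :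
    expGrowthSup v ≤ expGrowthSup (fun n ↦ ∑ k ∈ Icc 1 n, u k * v (n - k)) := by
  refine (expGrowthSup_of_eventually_ge hu (Eventually.of_forall fun n ↦ ?_)).trans
    (expGrowthSup_comp_add_one_le (u := fun n ↦ ∑ k ∈ Icc 1 n, u k * v (n - k)))
  simpa using single_le_sum (f := fun k ↦ u k * v (n + 1 - k)) (fun _ _ ↦ zero_le)
    (mem_Icc.2 ⟨le_rfl, Nat.le_add_left 1 n⟩)

theorem expGrowthSup_sum_Icc_mul_sub (hu : ∀ n, u n ≠ ∞) (hv : ∀ n, v n ≠ ∞)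
    (hu₁ : u 1 ≠ 0) (hv₀ : v 0 ≠ 0) :
    expGrowthSup (fun n ↦ ∑ k ∈ Icc 1 n, u k * v (n - k)) =
      max (expGrowthSup u) (expGrowthSup v) :=
  le_antisymm (expGrowthSup_sum_Icc_mul_sub_le hu hv)
    (max_le (expGrowthSup_le_expGrowthSup_sum_Icc_mul_sub_left hv₀)
      (expGrowthSup_le_expGrowthSup_sum_Icc_mul_sub_right hu₁))

end Convolution

/-- For sequences of positive reals `a`, `b`,
`limsup (1/n) log (∑_{k=1}^n a_k b_{n-k}) = max (limsup (1/n) log a_n) (limsup (1/n) log b_n)`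
in the extended reals. -/
theorem stmt0 (a b : ℕ → ℝ) (ha : ∀ n, 0 < a n) (hb : ∀ n, 0 < b n) :
    Filter.atTop.limsup (fun n : ℕ =>
        ((Real.log (∑ k ∈ Finset.Icc 1 n, a k * b (n - k)) / n : ℝ) : EReal)) =
      max (Filter.atTop.limsup fun n : ℕ => ((Real.log (a n) / n : ℝ) : EReal))
        (Filter.atTop.limsup fun n : ℕ => ((Real.log (b n) / n : ℝ) : EReal)) := by
  have hc : ∀ᶠ n in atTop, 0 < ∑ k ∈ Icc 1 n, a k * b (n - k) :=
    (eventually_ge_atTop 1).mono fun n hn ↦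
      sum_pos (fun k _ ↦ mul_pos (ha k) (hb _)) ⟨1, mem_Icc.2 ⟨le_rfl, hn⟩⟩
  have hofReal : (fun n ↦ ENNReal.ofReal (∑ k ∈ Icc 1 n, a k * b (n - k))) =
      fun n ↦ ∑ k ∈ Icc 1 n, ENNReal.ofReal (a k) * ENNReal.ofReal (b (n - k)) := by
    funext n
    rw [ENNReal.ofReal_sum_of_nonneg fun k _ ↦ (mul_pos (ha k) (hb _)).le]
    simp only [ENNReal.ofReal_mul (ha _).le]
  rw [limsup_log_div_eq_expGrowthSup hc, hofReal, limsup_log_div_eq_expGrowthSup (.of_forall ha),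
    limsup_log_div_eq_expGrowthSup (.of_forall hb)]
  exact expGrowthSup_sum_Icc_mul_sub (u := fun n ↦ ENNReal.ofReal (a n))
    (v := fun n ↦ ENNReal.ofReal (b n)) (fun _ ↦ ENNReal.ofReal_ne_top)
    (fun _ ↦ ENNReal.ofReal_ne_top) (ENNReal.ofReal_pos.2 (ha 1)).ne'
    (ENNReal.ofReal_pos.2 (hb 0)).ne'
end

section
/- Let $X$ be a compact metric space, $T$ a correspondence on $X$, $f$ a continuous self-map of a closed subset $Y \subset X$ such that $T(x) \cap Y = \{f(x)\}$ for all $x \in Y$. If $\mu$ is an $f$-invariant Borel probability measure on $Y$ and $\hat\mu$ is its extension to $X$ defined by $\hat\mu(A) := \mu(A \cap Y)$, then $\hat\mu$ is $T$-invariant, i.e., $\hat\mu(A) \le \hat\mu(T^{-1}(A))$ for all Borel $A \subset X$. -/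
open MeasureTheory

/-- If `T` restricts on a closed set `Y` to the single-valued correspondence
induced by a continuous map `f : Y → Y` (`T x ∩ Y = {f x}`), and `μ` is an `f`-invariant
Borel probability measure on `Y`, then the extension `μ̂ (A) = μ (A ∩ Y)` (the pushforward
of `μ` along the inclusion) is `T`-invariant: `μ̂ A ≤ μ̂ (T⁻¹ A)` for all Borel `A`. -/
theorem stmt11 {X : Type*} [MetricSpace X] [CompactSpace X] [MeasurableSpace X] [BorelSpace X]
    (T : X → Set X) (hval : ∀ x, (T x).Nonempty ∧ IsClosed (T x))
    (hgraph : IsClosed {p : X × X | p.2 ∈ T p.1})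
    (Y : Set X) (hY : IsClosed Y) (f : Y → Y) (hf : Continuous f)
    (hTY : ∀ x : Y, T ↑x ∩ Y = {((f x : Y) : X)})
    (μ : Measure Y) [IsProbabilityMeasure μ] (hinv : μ.map f = μ) :
    ∀ A : Set X, MeasurableSet A →
      (μ.map (Subtype.val : Y → X)) A ≤
        (μ.map (Subtype.val : Y → X)) {x : X | (T x ∩ A).Nonempty} := by
  intro A hA
  have hval_meas : Measurable (Subtype.val : Y → X) := measurable_subtype_coe
  have h1 : (μ.map (Subtype.val : Y → X)) A = μ (Subtype.val ⁻¹' A) :=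
    Measure.map_apply hval_meas hA
  have h2 : μ (Subtype.val ⁻¹' A) = μ (f ⁻¹' (Subtype.val ⁻¹' A)) := by
    conv_lhs => rw [← hinv]
    rw [Measure.map_apply hf.measurable (hval_meas hA)]
  have hsub : f ⁻¹' (Subtype.val ⁻¹' A) ⊆
      Subtype.val ⁻¹' {x : X | (T x ∩ A).Nonempty} := by
    intro y hy
    have hfy : ((f y : Y) : X) ∈ T ↑y := by
      have : ((f y : Y) : X) ∈ T ↑y ∩ Y := by rw [hTY y]; rfl
      exact this.1
    exact ⟨((f y : Y) : X), hfy, hy⟩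
  calc (μ.map (Subtype.val : Y → X)) A = μ (f ⁻¹' (Subtype.val ⁻¹' A)) := h1.trans h2
    _ ≤ μ (Subtype.val ⁻¹' {x : X | (T x ∩ A).Nonempty}) := measure_mono hsub
    _ ≤ (μ.map (Subtype.val : Y → X)) {x : X | (T x ∩ A).Nonempty} :=
        Measure.le_map_apply hval_meas.aemeasurable _
end

section
/- Let $X$ be a compact metric space, $T$ a correspondence on $X$, $Y \subset X$ closed, and $f: Y \to Y$ continuous with $T(x) \cap Y = \{f(x)\}$ for all $x \in Y$. If $\mu$ is an ergodic $f$-invariant Borel probability measure on $Y$ (an extreme point of $\mathcal{P}_f(Y)$), then the extension $\hat\mu(A) := \mu(A \cap Y)$ is an extreme point of the set $\mathcal{P}_T(X)$ of $T$-invariant Borel probability measures on $X$. -/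
open MeasureTheory ENNReal

/-!
Every `T`-invariant probability measure `m` that is absolutely continuous with respect to
`μ̂` lives on `Y`, so it is the push-forward of its restriction `ν` to `Y`. On `Y` the
correspondence is single-valued: for `B ⊆ Y` the `T`-preimage of `B`, intersected with `Y`,
is `f⁻¹ B`, so `T`-invariance of `m` says `ν B ≤ ν (f⁻¹ B)`, which for a probability measure
forces `f`-invariance. A convex decomposition of `μ̂` in `𝒫_T(X)` therefore comes from one of
`μ` in `𝒫_f(Y)`, which is trivial by extremality of `μ`.
-/

theorem MeasureTheory.Measure.map_eq_self_of_le_measure_preimage {α : Type*} [MeasurableSpace α] {f : α → α}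
    {ν : Measure α} [IsFiniteMeasure ν] (hf : Measurable f)
    (h : ∀ B, MeasurableSet B → ν B ≤ ν (f ⁻¹' B)) : ν.map f = ν := by
  refine Measure.ext fun B hB => ?_
  rw [Measure.map_apply hf hB]
  refine le_antisymm ?_ (h B hB)
  have hcompl := h Bᶜ hB.compl
  rw [Set.preimage_compl, measure_compl hB (measure_ne_top _ _),
    measure_compl (hf hB) (measure_ne_top _ _)] at hcompl
  exact (ENNReal.sub_le_sub_iff_left (measure_mono (Set.subset_univ _))
    (measure_ne_top _ _)).1 hcompl

section Correspondence

variable {X : Type*} {T : X → Set X} {Y : Set X} {f : Y → Y}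

theorem preimage_comp_val_subset_preimage_val_setOf_inter_nonempty
    (hTY : ∀ x : Y, T ↑x ∩ Y = {((f x : Y) : X)}) (A : Set X) :
    f ⁻¹' (Subtype.val ⁻¹' A) ⊆ Subtype.val ⁻¹' {x : X | (T x ∩ A).Nonempty} :=
  fun y hy => ⟨f y, ((hTY y).symm ▸ rfl : ((f y : Y) : X) ∈ T y ∩ Y).1, hy⟩

theorem preimage_val_setOf_inter_image_val_nonempty
    (hTY : ∀ x : Y, T ↑x ∩ Y = {((f x : Y) : X)}) (B : Set Y) :
    Subtype.val ⁻¹' {x : X | (T x ∩ Subtype.val '' B).Nonempty} = f ⁻¹' B := by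
  refine Set.Subset.antisymm ?_ (by
    simpa [Subtype.val_injective.preimage_image] using
      preimage_comp_val_subset_preimage_val_setOf_inter_nonempty hTY (Subtype.val '' B))
  rintro y ⟨_, hzT, ⟨z, hzB, rfl⟩⟩
  have hz : (z : X) ∈ T y ∩ Y := ⟨hzT, z.2⟩
  rw [hTY y, Set.mem_singleton_iff] at hz
  rwa [Set.mem_preimage, ← Subtype.val_injective hz]

variable [MeasurableSpace X]

/-- `m A ≤ m (T⁻¹ A)` for every measurable `A`, where `T⁻¹ A = {x | T x ∩ A ≠ ∅}`. -/
def IsCorrespondenceInvariant (T : X → Set X) (m : Measure X) : Prop :=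
  ∀ A : Set X, MeasurableSet A → m A ≤ m {x : X | (T x ∩ A).Nonempty}

theorem isCorrespondenceInvariant_map_val_iff (hY : MeasurableSet Y)
    (hTY : ∀ x : Y, T ↑x ∩ Y = {((f x : Y) : X)}) (ν : Measure Y) :
    IsCorrespondenceInvariant T (ν.map Subtype.val) ↔
      ∀ B : Set Y, MeasurableSet B → ν B ≤ ν (f ⁻¹' B) := by
  have hemb := MeasurableEmbedding.subtype_coe hY
  constructor
  · intro hT B hB
    simpa [hemb.map_apply, Subtype.val_injective.preimage_image,
      preimage_val_setOf_inter_image_val_nonempty hTY B] using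
      hT _ (hemb.measurableSet_image.2 hB)
  · intro hle A hA
    rw [hemb.map_apply, hemb.map_apply]
    exact (hle _ (measurable_subtype_coe hA)).trans
      (measure_mono (preimage_comp_val_subset_preimage_val_setOf_inter_nonempty hTY A))

theorem exists_map_val_eq_of_isCorrespondenceInvariant (hY : MeasurableSet Y)
    (hTY : ∀ x : Y, T ↑x ∩ Y = {((f x : Y) : X)}) (hf : Measurable f)
    {m : Measure X} [IsProbabilityMeasure m] (hm : IsCorrespondenceInvariant T m)
    (hmY : ∀ᵐ x ∂m, x ∈ Y) :
    ∃ ν : Measure Y, IsProbabilityMeasure ν ∧ ν.map f = ν ∧ ν.map Subtype.val = m := by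
  have hemb := MeasurableEmbedding.subtype_coe hY
  set ν : Measure Y := m.comap Subtype.val
  have hmap : ν.map Subtype.val = m := by
    rw [hemb.map_comap, Subtype.range_coe, Measure.restrict_eq_self_of_ae_mem hmY]
  have hprob : IsProbabilityMeasure ν :=
    ⟨by rw [← Set.preimage_univ (f := Subtype.val), ← hemb.map_apply, hmap, measure_univ]⟩
  refine ⟨ν, hprob, ?_, hmap⟩
  rw [← hmap, isCorrespondenceInvariant_map_val_iff hY hTY] at hm
  exact Measure.map_eq_self_of_le_measure_preimage hf hm

end Correspondence

theorem stmt12_general {X : Type*} [MetricSpace X] [MeasurableSpace X] [BorelSpace X]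
    (T : X → Set X)
    (Y : Set X) (hY : IsClosed Y) (f : Y → Y) (hf : Continuous f)
    (hTY : ∀ x : Y, T ↑x ∩ Y = {((f x : Y) : X)})
    (μ : Measure Y) [IsProbabilityMeasure μ] (hinv : μ.map f = μ)
    (hext : ∀ m₁ m₂ : Measure Y,
      (IsProbabilityMeasure m₁ ∧ m₁.map f = m₁) →
      (IsProbabilityMeasure m₂ ∧ m₂.map f = m₂) →
      ∀ p : ℝ≥0∞, 0 < p → p < 1 → μ = p • m₁ + (1 - p) • m₂ → m₁ = m₂) :
    (IsProbabilityMeasure (μ.map (Subtype.val : Y → X)) ∧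
      ∀ A : Set X, MeasurableSet A →
        (μ.map (Subtype.val : Y → X)) A ≤
          (μ.map (Subtype.val : Y → X)) {x : X | (T x ∩ A).Nonempty}) ∧
    ∀ m₁ m₂ : Measure X,
      (IsProbabilityMeasure m₁ ∧
        ∀ A : Set X, MeasurableSet A → m₁ A ≤ m₁ {x : X | (T x ∩ A).Nonempty}) →
      (IsProbabilityMeasure m₂ ∧
        ∀ A : Set X, MeasurableSet A → m₂ A ≤ m₂ {x : X | (T x ∩ A).Nonempty}) →
      ∀ p : ℝ≥0∞, 0 < p → p < 1 →
        μ.map (Subtype.val : Y → X) = p • m₁ + (1 - p) • m₂ → m₁ = m₂ := by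
  have hYm := hY.measurableSet
  have hemb := MeasurableEmbedding.subtype_coe hYm
  refine ⟨⟨Measure.isProbabilityMeasure_map hemb.measurable.aemeasurable,
    (isCorrespondenceInvariant_map_val_iff hYm hTY μ).2 fun B hB => ?_⟩, ?_⟩
  · rw [← Measure.map_apply hf.measurable hB, hinv]
  rintro m₁ m₂ ⟨hm₁, hT₁⟩ ⟨hm₂, hT₂⟩ p hp0 hp1 hdecomp
  have hμY : ∀ᵐ x ∂μ.map Subtype.val, x ∈ Y := by
    simpa using ae_map_mem_range Subtype.val (by simpa using hYm) μ
  have hac₁ : m₁ ≪ μ.map Subtype.val :=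
    hdecomp ▸ (Measure.absolutelyContinuous_smul hp0.ne').add_right _
  have hac₂ : m₂ ≪ μ.map Subtype.val :=
    hdecomp ▸ (Measure.absolutelyContinuous_smul (tsub_pos_of_lt hp1).ne').add_right' _
  obtain ⟨ν₁, hν₁, hinv₁, rfl⟩ :=
    exists_map_val_eq_of_isCorrespondenceInvariant hYm hTY hf.measurable hT₁ (hac₁.ae_le hμY)
  obtain ⟨ν₂, hν₂, hinv₂, rfl⟩ :=
    exists_map_val_eq_of_isCorrespondenceInvariant hYm hTY hf.measurable hT₂ (hac₂.ae_le hμY)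
  have hdecompY : μ = p • ν₁ + (1 - p) • ν₂ := hemb.map_injective <| by
    rw [hdecomp, Measure.map_add _ _ hemb.measurable, Measure.map_smul, Measure.map_smul]
  rw [hext ν₁ ν₂ ⟨hν₁, hinv₁⟩ ⟨hν₂, hinv₂⟩ p hp0 hp1 hdecompY]

/-- If `T x ∩ Y = {f x}` on a closed subset `Y` with `f : Y → Y` continuous, and
`μ` is an extreme point of the set of `f`-invariant Borel probability measures on `Y`, then
its extension `μ̂ (A) = μ (A ∩ Y)` is an extreme point of the set `𝒫_T(X)` of `T`-invariant
Borel probability measures on `X`. -/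
theorem stmt12 {X : Type*} [MetricSpace X] [CompactSpace X] [MeasurableSpace X] [BorelSpace X]
    (T : X → Set X) (hval : ∀ x, (T x).Nonempty ∧ IsClosed (T x))
    (hgraph : IsClosed {p : X × X | p.2 ∈ T p.1})
    (Y : Set X) (hY : IsClosed Y) (f : Y → Y) (hf : Continuous f)
    (hTY : ∀ x : Y, T ↑x ∩ Y = {((f x : Y) : X)})
    (μ : Measure Y) [IsProbabilityMeasure μ] (hinv : μ.map f = μ)
    (hext : ∀ m₁ m₂ : Measure Y,
      (IsProbabilityMeasure m₁ ∧ m₁.map f = m₁) →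
      (IsProbabilityMeasure m₂ ∧ m₂.map f = m₂) →
      ∀ p : ℝ≥0∞, 0 < p → p < 1 → μ = p • m₁ + (1 - p) • m₂ → m₁ = m₂) :
    (IsProbabilityMeasure (μ.map (Subtype.val : Y → X)) ∧
      ∀ A : Set X, MeasurableSet A →
        (μ.map (Subtype.val : Y → X)) A ≤
          (μ.map (Subtype.val : Y → X)) {x : X | (T x ∩ A).Nonempty}) ∧
    ∀ m₁ m₂ : Measure X,
      (IsProbabilityMeasure m₁ ∧
        ∀ A : Set X, MeasurableSet A → m₁ A ≤ m₁ {x : X | (T x ∩ A).Nonempty}) →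
      (IsProbabilityMeasure m₂ ∧
        ∀ A : Set X, MeasurableSet A → m₂ A ≤ m₂ {x : X | (T x ∩ A).Nonempty}) →
      ∀ p : ℝ≥0∞, 0 < p → p < 1 →
        μ.map (Subtype.val : Y → X) = p • m₁ + (1 - p) • m₂ → m₁ = m₂ :=
  stmt12_general T Y hY f hf hTY μ hinv hext
end

section
/- Let $K$ be a compact metric space and $p: C(K) \to \mathbb{R}$ convex, monotone, and translation-invariant, and define $\mathfrak{h}(\nu) = \inf\{\int\phi\,d\nu : p(-\phi) \le 0\}$ for Borel probability measures $\nu$ on $K$. Then for every $\phi \in C(K)$: (a) $p(\phi) \ge \sup_\nu \{\mathfrak{h}(\nu) + \int \phi\,d\nu\}$ where $\nu$ ranges over all Borel probability measures on $K$; (b) for each fixed $\nu$, the inverse variational formula $\mathfrak{h}(\nu) = \inf_{\psi \in C(K)}\{p(\psi) - \int \psi\,d\nu\}$ holds; (c) equality in (a) is attained: $p(\phi) = \max_\nu\{\mathfrak{h}(\nu) + \int\phi\,d\nu\}$, with the maximum attained at any tangent functional to $p$ at $\phi$. -/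
/-!
For a probability measure `ν` and any `ψ`, the function `p ψ - ψ` is admissible in the infimum
defining `𝔥(ν)`, so `𝔥(ν) ≤ p ψ - ∫ ψ dν`; this gives (a) and one half of (b), and the other half
comes from testing the infimum in (b) with `-φ` for admissible `φ`. If `ν` is tangent at `φ`,
testing tangency with `-φ' - φ` for admissible `φ'` reverses the inequality (a).

A tangent measure exists: being monotone and commuting with constants, `p` is 1-Lipschitz, so as a
continuous convex function it has a continuous subgradient `L` at `φ` (separate the open strict
epigraph from `(φ, p φ)`). The same two properties make `L` positive with `L 1 = 1`, so by
Riesz–Markov–Kakutani `L` is integration against a probability measure.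
-/

open MeasureTheory

/-- The abstract measure-theoretic entropy associated to a pressure-like functional
`p : C(K) → ℝ`: `𝔥(ν) = inf { ∫φ dν : p(-φ) ≤ 0 }` (in the extended reals). -/
noncomputable def absEnt {K : Type*} [TopologicalSpace K] [MeasurableSpace K]
    (p : C(K, ℝ) → ℝ) (ν : Measure K) : EReal :=
  ⨅ (φ : C(K, ℝ)) (_ : p (-φ) ≤ 0), ((∫ x, φ x ∂ν : ℝ) : EReal)

open scoped CompactlySupported

theorem ConvexOn.exists_le_sub {E : Type*} [TopologicalSpace E] [AddCommGroup E] [Module ℝ E]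
    [IsTopologicalAddGroup E] [ContinuousSMul ℝ E] {f : E → ℝ} (hf : ConvexOn ℝ Set.univ f)
    (hcont : Continuous f) (x : E) : ∃ L : StrongDual ℝ E, ∀ y, L (y - x) ≤ f y - f x := by
  have hopen : IsOpen {z : E × ℝ | f z.1 < z.2} :=
    isOpen_lt (hcont.comp continuous_fst) continuous_snd
  have hconvex : Convex ℝ {z : E × ℝ | f z.1 < z.2} := by
    simpa using hf.convex_strict_epigraph
  obtain ⟨g, hg⟩ :=
    geometric_hahn_banach_open_point hconvex hopen (x := (x, f x)) (lt_irrefl (f x))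
  set c := g (0, 1)
  have hsep (y : E) (t : ℝ) (ht : f y < t) : g (y - x, 0) + (t - f x) * c < 0 := by
    have := hg (y, t) ht
    have e : (y, t) = (x, f x) + (y - x, 0) + (t - f x) • ((0 : E), (1 : ℝ)) := by
      ext <;> simp
    rw [e, map_add, map_add, map_smul, smul_eq_mul] at this
    linarith
  have hc : c < 0 := by
    have := hsep x (f x + 1) (lt_add_one _)
    simp only [sub_self, Prod.mk_zero_zero, map_zero, add_sub_cancel_left] at this
    linarith
  refine ⟨(-c)⁻¹ • g.comp (ContinuousLinearMap.inl ℝ E ℝ), fun y => ?_⟩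
  rw [smul_apply, smul_eq_mul, inv_mul_le_iff₀ (neg_pos.2 hc)]
  refine le_of_forall_pos_lt_add fun ε hε => ?_
  have := hsep y (f y + -ε / c) (lt_add_of_pos_right _ (div_pos_of_neg_of_neg (by linarith) hc))
  have e : -ε / c * c = -ε := div_mul_cancel₀ _ hc.ne
  simp only [ContinuousLinearMap.comp_apply, ContinuousLinearMap.inl_apply]
  linarith

theorem exists_isProbabilityMeasure_integral_eq {K : Type*} [TopologicalSpace K] [T2Space K]
    [CompactSpace K] [MeasurableSpace K] [BorelSpace K]
    (L : C(K, ℝ) →ₗ[ℝ] ℝ) (hpos : ∀ f, 0 ≤ f → 0 ≤ L f) (hone : L 1 = 1) :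
    ∃ ν : Measure K, IsProbabilityMeasure ν ∧ ∀ f : C(K, ℝ), ∫ x, f x ∂ν = L f := by
  let Λ : C_c(K, ℝ) →ₚ[ℝ] ℝ :=
    { toFun g := L g.toContinuousMap
      map_add' g g' := L.map_add _ _
      map_smul' c g := L.map_smul c _
      monotone' g g' h := by
        simpa using hpos (g'.toContinuousMap - g.toContinuousMap) (sub_nonneg.2 h) }
  have hΛ (f : C(K, ℝ)) : ∫ x, f x ∂(RealRMK.rieszMeasure Λ) = L f :=
    RealRMK.integral_rieszMeasure Λ (CompactlySupportedContinuousMap.continuousMapEquiv f)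
  refine ⟨RealRMK.rieszMeasure Λ, isProbabilityMeasure_iff_real.2 ?_, hΛ⟩
  simpa [hone] using hΛ 1

theorem ContinuousMap.integrable {K E : Type*} [TopologicalSpace K] [CompactSpace K]
    [MeasurableSpace K] [OpensMeasurableSpace K] [NormedAddCommGroup E] (f : C(K, E))
    (μ : Measure K) [IsFiniteMeasure μ] : Integrable f μ :=
  f.continuous.integrable_of_hasCompactSupport (HasCompactSupport.of_compactSpace f)

section Pressure

variable {K : Type*} [TopologicalSpace K] [CompactSpace K] {p : C(K, ℝ) → ℝ}

theorem lipschitzWith_one_of_monotone_of_add_const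
    (hmono : ∀ φ ψ : C(K, ℝ), (∀ x, φ x ≤ ψ x) → p φ ≤ p ψ)
    (htrans : ∀ (φ : C(K, ℝ)) (c : ℝ), p (φ + ContinuousMap.const K c) = p φ + c) :
    LipschitzWith 1 p := by
  refine LipschitzWith.of_le_add fun φ ψ => ?_
  rw [← htrans]
  refine hmono _ _ fun x => ?_
  have := (le_abs_self _).trans ((Real.dist_eq _ _).symm.trans_le
    (ContinuousMap.dist_apply_le_dist (f := φ) (g := ψ) x))
  simp only [ContinuousMap.add_apply, ContinuousMap.const_apply]
  linarith

theorem exists_tangent_functional (hconv : ConvexOn ℝ Set.univ p)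
    (hmono : ∀ φ ψ : C(K, ℝ), (∀ x, φ x ≤ ψ x) → p φ ≤ p ψ)
    (htrans : ∀ (φ : C(K, ℝ)) (c : ℝ), p (φ + ContinuousMap.const K c) = p φ + c)
    (φ : C(K, ℝ)) : ∃ L : StrongDual ℝ C(K, ℝ), ∀ ψ, L ψ ≤ p (φ + ψ) - p φ := by
  obtain ⟨L, hL⟩ :=
    hconv.exists_le_sub (lipschitzWith_one_of_monotone_of_add_const hmono htrans).continuous φ
  exact ⟨L, fun ψ => by simpa using hL (φ + ψ)⟩

theorem exists_tangent_measure [MeasurableSpace K] [BorelSpace K] [T2Space K]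
    (hconv : ConvexOn ℝ Set.univ p)
    (hmono : ∀ φ ψ : C(K, ℝ), (∀ x, φ x ≤ ψ x) → p φ ≤ p ψ)
    (htrans : ∀ (φ : C(K, ℝ)) (c : ℝ), p (φ + ContinuousMap.const K c) = p φ + c)
    (φ : C(K, ℝ)) : ∃ ν : Measure K, IsProbabilityMeasure ν ∧
      ∀ ψ : C(K, ℝ), ∫ x, ψ x ∂ν ≤ p (φ + ψ) - p φ := by
  obtain ⟨L, hL⟩ := exists_tangent_functional hconv hmono htrans φ
  have hpos (f : C(K, ℝ)) (hf : 0 ≤ f) : 0 ≤ L f := by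
    have h₁ := hL (-f)
    have h₂ := hmono (φ + -f) φ fun x => by simpa using hf x
    rw [map_neg] at h₁
    linarith
  have hone : L 1 = 1 := by
    have h₁ := hL (ContinuousMap.const K 1)
    have h₂ := hL (-ContinuousMap.const K 1)
    rw [htrans] at h₁
    rw [map_neg, show -ContinuousMap.const K (1 : ℝ) = ContinuousMap.const K (-1) from rfl,
      htrans] at h₂
    rw [ContinuousMap.const_one] at h₁ h₂
    linarith
  obtain ⟨ν, hν, hint⟩ := exists_isProbabilityMeasure_integral_eq L.toLinearMap hpos hone
  exact ⟨ν, hν, fun ψ => (hint ψ).trans_le (hL ψ)⟩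

end Pressure

section Entropy

theorem absEnt_le {K : Type*} [TopologicalSpace K] [MeasurableSpace K] {p : C(K, ℝ) → ℝ}
    {ν : Measure K} {φ : C(K, ℝ)} (hφ : p (-φ) ≤ 0) :
    absEnt p ν ≤ ((∫ x, φ x ∂ν : ℝ) : EReal) :=
  iInf₂_le φ hφ

theorem le_absEnt {K : Type*} [TopologicalSpace K] [MeasurableSpace K] {p : C(K, ℝ) → ℝ}
    {ν : Measure K} {a : EReal}
    (h : ∀ φ : C(K, ℝ), p (-φ) ≤ 0 → a ≤ ((∫ x, φ x ∂ν : ℝ) : EReal)) :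
    a ≤ absEnt p ν :=
  le_iInf₂ h

variable {K : Type*} [TopologicalSpace K] [CompactSpace K] [MeasurableSpace K]
  [OpensMeasurableSpace K] {p : C(K, ℝ) → ℝ} {ν : Measure K} [IsProbabilityMeasure ν]

theorem absEnt_le_sub_integral
    (htrans : ∀ (φ : C(K, ℝ)) (c : ℝ), p (φ + ContinuousMap.const K c) = p φ + c)
    (ψ : C(K, ℝ)) : absEnt p ν ≤ ((p ψ - ∫ x, ψ x ∂ν : ℝ) : EReal) := by
  have hadm : p (-(ContinuousMap.const K (p ψ) - ψ)) ≤ 0 := by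
    rw [neg_sub, sub_eq_add_neg, show -ContinuousMap.const K (p ψ) = ContinuousMap.const K (-p ψ)
      from rfl, htrans, add_neg_cancel]
  refine (absEnt_le hadm).trans_eq ?_
  simp [integral_sub (integrable_const _) (ψ.integrable ν)]

theorem absEnt_add_integral_le
    (htrans : ∀ (φ : C(K, ℝ)) (c : ℝ), p (φ + ContinuousMap.const K c) = p φ + c)
    (φ : C(K, ℝ)) : absEnt p ν + ((∫ x, φ x ∂ν : ℝ) : EReal) ≤ (p φ : EReal) := by
  calc absEnt p ν + ((∫ x, φ x ∂ν : ℝ) : EReal)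
      ≤ ((p φ - ∫ x, φ x ∂ν : ℝ) : EReal) + ((∫ x, φ x ∂ν : ℝ) : EReal) := by
        gcongr
        exact absEnt_le_sub_integral htrans φ
    _ = (p φ : EReal) := by rw [← EReal.coe_add, sub_add_cancel]

theorem absEnt_eq_iInf
    (htrans : ∀ (φ : C(K, ℝ)) (c : ℝ), p (φ + ContinuousMap.const K c) = p φ + c) :
    absEnt p ν = ⨅ ψ : C(K, ℝ), ((p ψ - ∫ x, ψ x ∂ν : ℝ) : EReal) := by
  refine le_antisymm (le_iInf (absEnt_le_sub_integral htrans)) (le_absEnt fun φ hφ => ?_)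
  refine (iInf_le _ (-φ)).trans ?_
  have hint : ∫ x, (-φ) x ∂ν = -∫ x, φ x ∂ν := integral_neg _
  rw [hint, EReal.coe_le_coe_iff]
  linarith

theorem absEnt_add_integral_eq_of_tangent
    (htrans : ∀ (φ : C(K, ℝ)) (c : ℝ), p (φ + ContinuousMap.const K c) = p φ + c)
    {φ : C(K, ℝ)} (hT : ∀ ψ : C(K, ℝ), ∫ x, ψ x ∂ν ≤ p (φ + ψ) - p φ) :
    absEnt p ν + ((∫ x, φ x ∂ν : ℝ) : EReal) = (p φ : EReal) := by
  have hge : ((p φ - ∫ x, φ x ∂ν : ℝ) : EReal) ≤ absEnt p ν := by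
    refine le_absEnt fun φ' hφ' => ?_
    have h := hT (-φ' - φ)
    simp only [add_sub_cancel, ContinuousMap.sub_apply, ContinuousMap.neg_apply] at h
    rw [integral_sub (f := fun x => -φ' x) (φ'.integrable ν).neg (φ.integrable ν),
      integral_neg] at h
    exact EReal.coe_le_coe_iff.2 (by linarith)
  refine (absEnt_add_integral_le htrans φ).antisymm ?_
  calc (p φ : EReal) = ((p φ - ∫ x, φ x ∂ν : ℝ) : EReal) + ((∫ x, φ x ∂ν : ℝ) : EReal) := by
        rw [← EReal.coe_add, sub_add_cancel]
    _ ≤ absEnt p ν + ((∫ x, φ x ∂ν : ℝ) : EReal) := by gcongr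

end Entropy

/-- abstract variational principle. For `p : C(K) → ℝ` convex, monotone and
translation-invariant on a compact metric space `K` and any `φ`:
(a) `𝔥(ν) + ∫φ dν ≤ p(φ)` for every Borel probability measure `ν`;
(b) the inverse variational formula `𝔥(ν) = inf_ψ (p(ψ) - ∫ψ dν)` holds;
(c) equality in (a) is attained by some probability measure, and by every tangent
functional to `p` at `φ`. -/
theorem stmt19 {K : Type*} [MetricSpace K] [CompactSpace K] [MeasurableSpace K] [BorelSpace K]
    (p : C(K, ℝ) → ℝ) (hconv : ConvexOn ℝ Set.univ p)
    (hmono : ∀ φ ψ : C(K, ℝ), (∀ x, φ x ≤ ψ x) → p φ ≤ p ψ)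
    (htrans : ∀ (φ : C(K, ℝ)) (c : ℝ), p (φ + ContinuousMap.const K c) = p φ + c)
    (φ : C(K, ℝ)) :
    (∀ ν : Measure K, IsProbabilityMeasure ν →
      absEnt p ν + ((∫ x, φ x ∂ν : ℝ) : EReal) ≤ (p φ : EReal)) ∧
    (∀ ν : Measure K, IsProbabilityMeasure ν →
      absEnt p ν = ⨅ ψ : C(K, ℝ), ((p ψ - ∫ x, ψ x ∂ν : ℝ) : EReal)) ∧
    (∃ ν : Measure K, IsProbabilityMeasure ν ∧
      absEnt p ν + ((∫ x, φ x ∂ν : ℝ) : EReal) = (p φ : EReal)) ∧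
    ∀ ν : Measure K, IsProbabilityMeasure ν →
      (∀ ψ : C(K, ℝ), (∫ x, ψ x ∂ν) ≤ p (φ + ψ) - p φ) →
      absEnt p ν + ((∫ x, φ x ∂ν : ℝ) : EReal) = (p φ : EReal) := by
  obtain ⟨ν₀, hν₀, hT₀⟩ := exists_tangent_measure hconv hmono htrans φ
  exact ⟨fun ν _ => absEnt_add_integral_le htrans φ,
    fun ν _ => absEnt_eq_iInf htrans,
    ⟨ν₀, hν₀, absEnt_add_integral_eq_of_tangent htrans hT₀⟩,
    fun ν _ hT => absEnt_add_integral_eq_of_tangent htrans hT⟩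
end
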